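/- Let S be a commutative ring, F a formal group law over S, n ≥ 3, and 1 ≤ i ≤ n−2. Then in R = S[[x_1,…,x_n]] one has ∂'_i(x_{i+1} −_F x_{i+2}) = −g(x_i, x_{i+1})^{-1} · g(x_{i+1}, x_i) · g(x_i −_F x_{i+2}, x_{i+1} −_F x_{i+2}); in particular ∂'_i(x_{i+1} −_F x_{i+2}) is an invertible element of R. -/

import Mathlib

/- Common setup: substitution of multivariate power series, formal group laws,
formal inverses, and the variable–swapping operation. -/

open MvPowerSeries Finsupp

noncomputable section

variable {S : Type*} [CommRing S]

/-- Substitution of a family of multivariate power series (each intended to have zero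
constant coefficient) into a power series in `k` variables.  When every `a j` has zero
constant coefficient, the coefficient of a monomial `m` of the substituted series only
receives contributions from exponents `d` with `d j ≤ deg m`, so the finite sum below
computes the genuine substitution. -/
noncomputable def msubst {k n : ℕ} (a : Fin k → MvPowerSeries (Fin n) S)
    (F : MvPowerSeries (Fin k) S) : MvPowerSeries (Fin n) S :=
  fun m =>
    ∑ d ∈ Finset.Iic (equivFunOnFinite.symm fun _ : Fin k => m.sum fun _ e => e),
      MvPowerSeries.coeff d F * MvPowerSeries.coeff m (∏ j, a j ^ d j)

/-- `F ∈ S[[x,y]]` is a (one-dimensional, commutative) formal group law over `S`: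
zero constant coefficient, commutativity `F(x,y) = F(y,x)`, unitality `F(x,0) = x`,
and associativity `F(F(x,y),z) = F(x,F(y,z))`. -/
def IsFormalGroupLaw (F : MvPowerSeries (Fin 2) S) : Prop :=
  MvPowerSeries.constantCoeff F = 0 ∧
  msubst ![(X 1 : MvPowerSeries (Fin 2) S), X 0] F = F ∧
  msubst ![(X 0 : MvPowerSeries (Fin 2) S), 0] F = X 0 ∧
  msubst ![msubst ![(X 0 : MvPowerSeries (Fin 3) S), X 1] F, X 2] F
    = msubst ![(X 0 : MvPowerSeries (Fin 3) S), msubst ![(X 1 : MvPowerSeries (Fin 3) S), X 2] F] F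

/-- `ι ∈ S[[x]]` is the formal inverse of `F`: it has zero constant coefficient
and `F(x, ι(x)) = 0`. -/
def IsFormalInverse (F : MvPowerSeries (Fin 2) S) (ι : MvPowerSeries (Fin 1) S) : Prop :=
  MvPowerSeries.constantCoeff ι = 0 ∧
  msubst ![(X 0 : MvPowerSeries (Fin 1) S), ι] F = 0

/-- `ι(b)`, the substitution of `b` into the formal inverse `ι`. -/
noncomputable def fneg (ι : MvPowerSeries (Fin 1) S) {n : ℕ}
    (b : MvPowerSeries (Fin n) S) : MvPowerSeries (Fin n) S :=
  msubst ![b] ι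

/-- `a −_F b := F(a, ι(b))`. -/
noncomputable def fsub (F : MvPowerSeries (Fin 2) S) (ι : MvPowerSeries (Fin 1) S) {n : ℕ}
    (a b : MvPowerSeries (Fin n) S) : MvPowerSeries (Fin n) S :=
  msubst ![a, fneg ι b] F

/-- Substitution `g(a,b)` of two power series into a two-variable power series `g`. -/
noncomputable def gsub (g : MvPowerSeries (Fin 2) S) {n : ℕ}
    (a b : MvPowerSeries (Fin n) S) : MvPowerSeries (Fin n) S :=
  msubst ![a, b] g

/-- The map on multivariate power series interchanging the variables `x_i` and `x_j`
(the renaming along the transposition `(i,j)`). -/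
def swapVars {n : ℕ} (i j : Fin n) (f : MvPowerSeries (Fin n) S) :
    MvPowerSeries (Fin n) S :=
  fun m => f (equivMapDomain (Equiv.swap i j) m)

/- Substituting into `x - y = (x -_F y)·g(x,y)` and using that power series without constant
term form a group under `F`,
`(x_j -_F x_i)·∂'_i(x_j -_F x_k) = (x_i -_F x_k) - (x_j -_F x_k)
  = ((x_i -_F x_k) -_F (x_j -_F x_k))·g(x_i -_F x_k, x_j -_F x_k) = (x_i -_F x_j)·g(…)`.
By the same identity `x_i -_F x_j = -g(x_i,x_j)⁻¹·g(x_j,x_i)·(x_j -_F x_i)`, so both sides are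
multiples of `x_j -_F x_i`, which may be cancelled since it is a unit multiple of the
non-zero-divisor `x_j - x_i`. -/

theorem MvPowerSeries.coeff_prod_pow_eq_zero_of_degree_lt {σ τ R : Type*} [Fintype σ]
    [CommSemiring R] {a : σ → MvPowerSeries τ R} (ha : ∀ s, constantCoeff (a s) = 0)
    {d : σ →₀ ℕ} {m : τ →₀ ℕ} (h : m.degree < d.degree) :
    coeff m (∏ s, a s ^ d s) = 0 := by
  refine coeff_of_lt_order (lt_of_lt_of_le (Nat.cast_lt.mpr h) ?_)
  calc ((d.degree : ℕ) : ℕ∞) = ∑ s, ((d s : ℕ) : ℕ∞) := by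
        rw [Finsupp.degree_eq_sum, Nat.cast_sum]
    _ ≤ ∑ s, (a s ^ d s).order :=
        Finset.sum_le_sum fun s _ => le_order_pow_of_constantCoeff_eq_zero _ (ha s)
    _ ≤ (∏ s, a s ^ d s).order := le_order_prod _ _

theorem msubst_eq_subst {k n : ℕ} {a : Fin k → MvPowerSeries (Fin n) S}
    (ha : ∀ t, constantCoeff (a t) = 0) (F : MvPowerSeries (Fin k) S) :
    msubst a F = subst a F := by
  ext m
  rw [coeff_subst (hasSubst_of_constantCoeff_zero ha), finsum_eq_sum_of_support_subset _
    (s := Finset.Iic (equivFunOnFinite.symm fun _ : Fin k => m.sum fun _ e => e))]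
  · simp only [Finsupp.prod_fintype _ _ (fun _ => pow_zero _), smul_eq_mul]
    rfl
  · intro d hd
    rw [Function.mem_support] at hd
    simp only [Finset.coe_Iic, Set.mem_Iic, Finsupp.le_def, coe_equivFunOnFinite_symm]
    intro t
    by_contra! hlt
    refine hd ?_
    rw [Finsupp.prod_fintype _ _ (fun _ => pow_zero _),
      coeff_prod_pow_eq_zero_of_degree_lt ha, smul_zero]
    calc m.degree = m.sum fun _ e => e := rfl
      _ < d t := hlt
      _ ≤ d.degree := by
        rw [Finsupp.degree_eq_sum]
        exact Finset.single_le_sum (by simp) (by simp)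

theorem constantCoeff_msubst_eq_zero {k n : ℕ} {a : Fin k → MvPowerSeries (Fin n) S}
    (ha : ∀ t, constantCoeff (a t) = 0) {F : MvPowerSeries (Fin k) S}
    (hF : constantCoeff F = 0) : constantCoeff (msubst a F) = 0 := by
  rw [msubst_eq_subst ha]
  exact constantCoeff_subst_eq_zero (hasSubst_of_constantCoeff_zero ha) ha hF

theorem msubst_zero {k n : ℕ} (a : Fin k → MvPowerSeries (Fin n) S) :
    msubst a (0 : MvPowerSeries (Fin k) S) = 0 := by
  ext m
  exact Finset.sum_eq_zero fun _ _ => zero_mul _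

theorem msubst_X {k n : ℕ} {a : Fin k → MvPowerSeries (Fin n) S}
    (ha : ∀ t, constantCoeff (a t) = 0) (t : Fin k) : msubst a (X t) = a t := by
  rw [msubst_eq_subst ha, subst_X (hasSubst_of_constantCoeff_zero ha)]

theorem msubst_msubst {k l n : ℕ} {a : Fin k → MvPowerSeries (Fin l) S}
    {b : Fin l → MvPowerSeries (Fin n) S} (ha : ∀ t, constantCoeff (a t) = 0)
    (hb : ∀ t, constantCoeff (b t) = 0) (F : MvPowerSeries (Fin k) S) :
    msubst b (msubst a F) = msubst (fun t => msubst b (a t)) F := by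
  have hba : ∀ t, constantCoeff (msubst b (a t)) = 0 :=
    fun t => constantCoeff_msubst_eq_zero hb (ha t)
  rw [msubst_eq_subst hba, msubst_eq_subst ha]
  simp only [msubst_eq_subst hb]
  exact subst_comp_subst_apply (hasSubst_of_constantCoeff_zero ha)
    (hasSubst_of_constantCoeff_zero hb) F

theorem constantCoeff_pair_eq_zero {σ : Type*} {a b : MvPowerSeries σ S}
    (ha : constantCoeff a = 0) (hb : constantCoeff b = 0) :
    ∀ t, constantCoeff (![a, b] t) = 0 :=
  Fin.forall_fin_two.2 ⟨ha, hb⟩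

theorem msubst_msubst_X_pair {k n : ℕ} {v : Fin k → MvPowerSeries (Fin n) S}
    (hv : ∀ t, constantCoeff (v t) = 0) (p q : Fin k) (G : MvPowerSeries (Fin 2) S) :
    msubst v (msubst ![X p, X q] G) = msubst ![v p, v q] G := by
  rw [msubst_msubst (constantCoeff_pair_eq_zero (constantCoeff_X _) (constantCoeff_X _)) hv]
  congr 1
  funext t
  fin_cases t <;> simp [msubst_X hv]

namespace IsFormalGroupLaw

variable {F : MvPowerSeries (Fin 2) S} (hF : IsFormalGroupLaw F) {n : ℕ}
  {a b c : MvPowerSeries (Fin n) S}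
include hF

theorem constantCoeff_msubst (ha : constantCoeff a = 0) (hb : constantCoeff b = 0) :
    constantCoeff (msubst ![a, b] F) = 0 :=
  constantCoeff_msubst_eq_zero (constantCoeff_pair_eq_zero ha hb) hF.1

theorem msubst_comm (ha : constantCoeff a = 0) (hb : constantCoeff b = 0) :
    msubst ![a, b] F = msubst ![b, a] F := by
  conv_lhs => rw [← hF.2.1, msubst_msubst_X_pair (constantCoeff_pair_eq_zero ha hb)]
  rfl

theorem msubst_zero_right (ha : constantCoeff a = 0) : msubst ![a, 0] F = a := by
  have haa := constantCoeff_pair_eq_zero ha ha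
  have h := congrArg (msubst ![a, a]) hF.2.2.1
  rw [msubst_msubst (constantCoeff_pair_eq_zero (constantCoeff_X _) (map_zero _)) haa,
    msubst_X haa] at h
  convert h using 2
  · funext t
    fin_cases t <;> simp [msubst_X haa, msubst_zero]
  · rfl

theorem msubst_assoc (ha : constantCoeff a = 0) (hb : constantCoeff b = 0)
    (hc : constantCoeff c = 0) :
    msubst ![msubst ![a, b] F, c] F = msubst ![a, msubst ![b, c] F] F := by
  have habc : ∀ t, constantCoeff (![a, b, c] t) = 0 :=
    Fin.forall_fin_succ.2 ⟨ha, constantCoeff_pair_eq_zero hb hc⟩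
  have hX : ∀ t : Fin 3, constantCoeff (X t : MvPowerSeries (Fin 3) S) = 0 :=
    fun _ => constantCoeff_X _
  have h := congrArg (msubst ![a, b, c]) hF.2.2.2
  rw [msubst_msubst (constantCoeff_pair_eq_zero (hF.constantCoeff_msubst (hX 0) (hX 1)) (hX 2))
      habc,
    msubst_msubst (constantCoeff_pair_eq_zero (hX 0) (hF.constantCoeff_msubst (hX 1) (hX 2)))
      habc] at h
  convert h using 2 <;> funext t <;> fin_cases t <;>
    simp [msubst_X habc, msubst_msubst_X_pair habc]

end IsFormalGroupLaw

theorem IsFormalInverse.msubst_fneg_right {F : MvPowerSeries (Fin 2) S}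
    {ι : MvPowerSeries (Fin 1) S} (hι : IsFormalInverse F ι) {n : ℕ}
    {a : MvPowerSeries (Fin n) S} (ha : constantCoeff a = 0) :
    msubst ![a, fneg ι a] F = 0 := by
  have ha' : ∀ t, constantCoeff (![a] t) = 0 := Fin.forall_fin_one.2 ha
  have h := congrArg (msubst ![a]) hι.2
  rw [msubst_msubst (constantCoeff_pair_eq_zero (constantCoeff_X _) hι.1) ha'] at h
  convert h using 2
  · funext t
    fin_cases t <;> simp [msubst_X ha', fneg]
  · exact (msubst_zero _).symm

theorem constantCoeff_fneg {ι : MvPowerSeries (Fin 1) S} (hι : constantCoeff ι = 0) {n : ℕ}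
    {b : MvPowerSeries (Fin n) S} (hb : constantCoeff b = 0) : constantCoeff (fneg ι b) = 0 :=
  constantCoeff_msubst_eq_zero (Fin.forall_fin_one.2 hb) hι

abbrev IsFormalGroupLaw.addCommGroup {F : MvPowerSeries (Fin 2) S} (hF : IsFormalGroupLaw F)
    {ι : MvPowerSeries (Fin 1) S} (hι : IsFormalInverse F ι) (n : ℕ) :
    AddCommGroup {a : MvPowerSeries (Fin n) S // constantCoeff a = 0} :=
  letI : Zero {a : MvPowerSeries (Fin n) S // constantCoeff a = 0} := ⟨⟨0, map_zero _⟩⟩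
  letI : Add {a : MvPowerSeries (Fin n) S // constantCoeff a = 0} :=
    ⟨fun a b => ⟨msubst ![a.1, b.1] F, hF.constantCoeff_msubst a.2 b.2⟩⟩
  letI : Neg {a : MvPowerSeries (Fin n) S // constantCoeff a = 0} :=
    ⟨fun a => ⟨fneg ι a.1, constantCoeff_fneg hι.1 a.2⟩⟩
  { add_assoc a b c := Subtype.ext (hF.msubst_assoc a.2 b.2 c.2)
    zero_add a :=
      Subtype.ext ((hF.msubst_comm (map_zero _) a.2).trans (hF.msubst_zero_right a.2))
    add_zero a := Subtype.ext (hF.msubst_zero_right a.2)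
    nsmul := nsmulRec
    zsmul := zsmulRec
    neg_add_cancel a := Subtype.ext
      ((hF.msubst_comm (constantCoeff_fneg hι.1 a.2) a.2).trans (hι.msubst_fneg_right a.2))
    add_comm a b := Subtype.ext (hF.msubst_comm a.2 b.2) }

section fsub

variable {F : MvPowerSeries (Fin 2) S} {ι : MvPowerSeries (Fin 1) S} {n : ℕ}
  {a b c : MvPowerSeries (Fin n) S}

theorem IsFormalGroupLaw.constantCoeff_fsub (hF : IsFormalGroupLaw F)
    (hι : IsFormalInverse F ι) (ha : constantCoeff a = 0) (hb : constantCoeff b = 0) :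
    constantCoeff (fsub F ι a b) = 0 :=
  hF.constantCoeff_msubst ha (constantCoeff_fneg hι.1 hb)

theorem IsFormalGroupLaw.fsub_fsub_fsub_cancel_right (hF : IsFormalGroupLaw F)
    (hι : IsFormalInverse F ι) (ha : constantCoeff a = 0) (hb : constantCoeff b = 0)
    (hc : constantCoeff c = 0) :
    fsub F ι (fsub F ι a c) (fsub F ι b c) = fsub F ι a b := by
  let := hF.addCommGroup hι n
  exact congrArg Subtype.val (sub_sub_sub_cancel_right
    (⟨a, ha⟩ : {a : MvPowerSeries (Fin n) S // constantCoeff a = 0}) ⟨b, hb⟩ ⟨c, hc⟩)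

theorem msubst_fsub (hι : constantCoeff ι = 0) {k : ℕ} {v : Fin n → MvPowerSeries (Fin k) S}
    (hv : ∀ t, constantCoeff (v t) = 0) (ha : constantCoeff a = 0) (hb : constantCoeff b = 0) :
    msubst v (fsub F ι a b) = fsub F ι (msubst v a) (msubst v b) := by
  have hfneg : msubst v (fneg ι b) = fneg ι (msubst v b) := by
    rw [fneg, fneg, msubst_msubst (Fin.forall_fin_one.2 hb) hv]
    congr 1
    funext t
    fin_cases t
    rfl
  rw [fsub, fsub, msubst_msubst (constantCoeff_pair_eq_zero ha (constantCoeff_fneg hι hb)) hv]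
  congr 1
  funext t
  fin_cases t
  · rfl
  · exact hfneg

end fsub

theorem sub_eq_fsub_mul_gsub {F : MvPowerSeries (Fin 2) S} {ι : MvPowerSeries (Fin 1) S}
    (hι : IsFormalInverse F ι) {g : MvPowerSeries (Fin 2) S}
    (hg : (X 0 : MvPowerSeries (Fin 2) S) - X 1 = fsub F ι (X 0) (X 1) * g) {n : ℕ}
    {a b : MvPowerSeries (Fin n) S} (ha : constantCoeff a = 0) (hb : constantCoeff b = 0) :
    a - b = fsub F ι a b * gsub g a b := by
  have hv := constantCoeff_pair_eq_zero ha hb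
  have hs := hasSubst_of_constantCoeff_zero hv
  have h := congrArg (subst ![a, b]) hg
  rw [subst_sub hs, subst_mul hs, subst_X hs, subst_X hs, ← msubst_eq_subst hv,
    ← msubst_eq_subst hv, msubst_fsub hι.1 hv (constantCoeff_X 0) (constantCoeff_X 1),
    msubst_X hv, msubst_X hv] at h
  exact h

theorem IsUnit.gsub {g : MvPowerSeries (Fin 2) S} (hg : IsUnit g) {n : ℕ}
    {a b : MvPowerSeries (Fin n) S} (ha : constantCoeff a = 0) (hb : constantCoeff b = 0) :
    IsUnit (gsub g a b) := by
  have hv := constantCoeff_pair_eq_zero ha hb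
  rw [_root_.gsub, msubst_eq_subst hv, ← coe_substAlgHom (hasSubst_of_constantCoeff_zero hv)]
  exact hg.map _

theorem swapVars_eq_msubst {n : ℕ} (i j : Fin n) (f : MvPowerSeries (Fin n) S) :
    swapVars i j f = msubst (fun t => X (Equiv.swap i j t)) f := by
  rw [msubst_eq_subst fun _ => constantCoeff_X _]
  change _ = subst (X ∘ Equiv.swap i j) f
  rw [← rename_eq_subst]
  ext m
  have hm : embDomain (Equiv.swap i j).toEmbedding (equivMapDomain (Equiv.swap i j) m) = m := by
    rw [embDomain_eq_mapDomain, equivMapDomain_eq_mapDomain, ← mapDomain_comp,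
      Equiv.coe_toEmbedding, Function.Involutive.comp_self (Equiv.swap_apply_self i j),
      mapDomain_id]
  have := coeff_embDomain_rename (R := S) (Equiv.swap i j).toEmbedding f
    (equivMapDomain (Equiv.swap i j) m)
  rw [hm] at this
  exact this.symm

theorem swapVars_X {n : ℕ} (i j s : Fin n) :
    swapVars i j (X s : MvPowerSeries (Fin n) S) = X (Equiv.swap i j s) := by
  rw [swapVars_eq_msubst, msubst_X fun _ => constantCoeff_X _]

theorem swapVars_fsub {F : MvPowerSeries (Fin 2) S} {ι : MvPowerSeries (Fin 1) S}
    (hι : constantCoeff ι = 0) {n : ℕ} (i j : Fin n) {a b : MvPowerSeries (Fin n) S}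
    (ha : constantCoeff a = 0) (hb : constantCoeff b = 0) :
    swapVars i j (fsub F ι a b) = fsub F ι (swapVars i j a) (swapVars i j b) := by
  simp only [swapVars_eq_msubst]
  exact msubst_fsub hι (fun _ => constantCoeff_X _) ha hb

theorem MvPowerSeries.isLeftRegular_X {σ R : Type*} [CommSemiring R] (s : σ) :
    IsLeftRegular (X s : MvPowerSeries σ R) := by
  intro f f' h
  ext m
  have := congrArg (coeff (single s 1 + m)) h
  dsimp only at this
  rwa [X_def, coeff_add_monomial_mul, coeff_add_monomial_mul, one_mul, one_mul] at this

theorem MvPowerSeries.isLeftRegular_X_sub_X {σ R : Type*} [Finite σ] [CommRing R] {i j : σ}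
    (hij : i ≠ j) : IsLeftRegular (X j - X i : MvPowerSeries σ R) := by
  classical
  -- the substitution `X j ↦ X j + X i` is invertible and sends `X j - X i` to `X j`
  set φ := Function.update (X : σ → MvPowerSeries σ R) j (X j + X i)
  set ψ := Function.update (X : σ → MvPowerSeries σ R) j (X j - X i)
  have hφ : HasSubst φ := hasSubst_of_constantCoeff_zero fun s => by
    rcases eq_or_ne s j with rfl | h <;> simp [φ, *]
  have hψ : HasSubst ψ := hasSubst_of_constantCoeff_zero fun s => by
    rcases eq_or_ne s j with rfl | h <;> simp [ψ, *]
  have hψφ : ∀ f, subst ψ (subst φ f) = f := by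
    intro f
    rw [subst_comp_subst_apply hφ hψ]
    convert congrFun subst_self f using 2
    · funext s
      rcases eq_or_ne s j with rfl | h
      · simp [φ, ψ, subst_add hψ, subst_X hψ, hij]
      · simp [φ, ψ, h, subst_X hψ]
    · rfl
  have hφX : subst φ (X j - X i : MvPowerSeries σ R) = X j := by
    simp [φ, subst_sub hφ, subst_X hφ, hij]
  intro f f' h
  have := congrArg (subst φ) h
  simp only [subst_mul hφ, hφX] at this
  simpa [hψφ] using congrArg (subst ψ) (isLeftRegular_X j this)

theorem fsub_eq_neg_mul_fsub {F : MvPowerSeries (Fin 2) S} {ι : MvPowerSeries (Fin 1) S}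
    (hι : IsFormalInverse F ι) {g : MvPowerSeries (Fin 2) S}
    (hg : (X 0 : MvPowerSeries (Fin 2) S) - X 1 = fsub F ι (X 0) (X 1) * g) (hgu : IsUnit g)
    {n : ℕ} {a b : MvPowerSeries (Fin n) S} (ha : constantCoeff a = 0)
    (hb : constantCoeff b = 0) :
    fsub F ι a b = -(Ring.inverse (gsub g a b) * gsub g b a) * fsub F ι b a := by
  obtain ⟨u, hu⟩ := hgu.gsub ha hb
  calc fsub F ι a b = fsub F ι a b * gsub g a b * ↑u⁻¹ := by
        rw [← hu, Units.mul_inv_cancel_right]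
    _ = -(b - a) * ↑u⁻¹ := by rw [← sub_eq_fsub_mul_gsub hι hg ha hb, neg_sub]
    _ = -(fsub F ι b a * gsub g b a) * ↑u⁻¹ := by rw [sub_eq_fsub_mul_gsub hι hg hb ha]
    _ = _ := by rw [← hu, Ring.inverse_unit]; ring

/-- `∂'_i(x_{i+1} −_F x_{i+2})` equals
`−g(x_i,x_{i+1})⁻¹·g(x_{i+1},x_i)·g(x_i −_F x_{i+2}, x_{i+1} −_F x_{i+2})`,
and in particular it is a unit of `R`. -/
theorem demazure'_of_fsub_invertible
    (F : MvPowerSeries (Fin 2) S) (hF : IsFormalGroupLaw F)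
    (ι : MvPowerSeries (Fin 1) S) (hι : IsFormalInverse F ι)
    (g : MvPowerSeries (Fin 2) S)
    (hg : (X 0 : MvPowerSeries (Fin 2) S) - X 1 = fsub F ι (X 0) (X 1) * g)
    (hgu : IsUnit g)
    {n : ℕ} (i j k : Fin n) (hij : (i : ℕ) + 1 = (j : ℕ)) (hjk : (j : ℕ) + 1 = (k : ℕ))
    (Dem' : MvPowerSeries (Fin n) S → MvPowerSeries (Fin n) S)
    (hDem' : ∀ f, fsub F ι (X j : MvPowerSeries (Fin n) S) (X i) * Dem' f
                    = swapVars i j f - f) :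
    Dem' (fsub F ι (X j : MvPowerSeries (Fin n) S) (X k))
      = -(Ring.inverse (gsub g (X i : MvPowerSeries (Fin n) S) (X j))
          * gsub g (X j : MvPowerSeries (Fin n) S) (X i)
          * gsub g (fsub F ι (X i : MvPowerSeries (Fin n) S) (X k))
                   (fsub F ι (X j : MvPowerSeries (Fin n) S) (X k))) ∧
    IsUnit (Dem' (fsub F ι (X j : MvPowerSeries (Fin n) S) (X k))) := by
  have hX : ∀ s : Fin n, constantCoeff (X s : MvPowerSeries (Fin n) S) = 0 := constantCoeff_X
  have hswap : swapVars i j (fsub F ι (X j) (X k)) = fsub F ι (X i) (X k) := by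
    rw [swapVars_fsub hι.1 i j (hX j) (hX k), swapVars_X, swapVars_X, Equiv.swap_apply_right,
      Equiv.swap_apply_of_ne_of_ne (Fin.ne_of_val_ne (by omega)) (Fin.ne_of_val_ne (by omega))]
  have hregular : IsLeftRegular (fsub F ι (X j : MvPowerSeries (Fin n) S) (X i)) := by
    refine IsLeftRegular.of_mul (a := gsub g (X j) (X i)) ?_
    rw [mul_comm, ← sub_eq_fsub_mul_gsub hι hg (hX j) (hX i)]
    exact isLeftRegular_X_sub_X (Fin.ne_of_val_ne (by omega))
  have hDem : Dem' (fsub F ι (X j) (X k)) = -(Ring.inverse (gsub g (X i) (X j))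
      * gsub g (X j) (X i) * gsub g (fsub F ι (X i) (X k)) (fsub F ι (X j) (X k))) := by
    apply hregular
    dsimp only
    rw [hDem', hswap, sub_eq_fsub_mul_gsub hι hg (hF.constantCoeff_fsub hι (hX i) (hX k))
      (hF.constantCoeff_fsub hι (hX j) (hX k)), hF.fsub_fsub_fsub_cancel_right hι (hX i) (hX j)
      (hX k), fsub_eq_neg_mul_fsub hι hg hgu (hX i) (hX j)]
    ring
  refine ⟨hDem, ?_⟩
  rw [hDem]
  exact ((isUnit_ringInverse.2 (hgu.gsub (hX i) (hX j))).mul (hgu.gsub (hX j) (hX i))).mul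
    (hgu.gsub (hF.constantCoeff_fsub hι (hX i) (hX k)) (hF.constantCoeff_fsub hι (hX j) (hX k)))
    |>.neg

end
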